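/- arXiv:1509.03257 — 7 statements merged into one kernel-verified Lean document; each statement's English description precedes it below -/
import Mathlib

section
/- Let A₁, A₂ be rank-3 real 3×4 matrices with distinct focal points f₁ ≠ f₂ in P^3, and let X ∈ P^3 not lie on the baseline (the line through f₁ and f₂). Then X is the unique point of P^3 mapping to (A₁X, A₂X) under both cameras; i.e., triangulation from two views recovers X uniquely. -/
/-!
By rank–nullity each camera's kernel is the line through its focal point, so agreeing with `X`
under camera `i` up to the scale `cᵢ` means `X' = cᵢ • X + (a multiple of fᵢ)`. Subtracting the
two expressions puts `(c₂ - c₁) • X` on the baseline, which forces `c₁ = c₂`; then `X' - c₁ • X`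
lies on both lines through the focal points, and these meet only in `0`.
-/

namespace Matrix

variable {K m n : Type*} [Field K] [Fintype n]

theorem ker_mulVecLin_eq_span_singleton (A : Matrix m n K) (hA : A.rank + 1 = Fintype.card n)
    {f : n → K} (hf : f ≠ 0) (hAf : A *ᵥ f = 0) :
    LinearMap.ker A.mulVecLin = K ∙ f := by
  have hker : Module.finrank K (LinearMap.ker A.mulVecLin) = 1 := by
    have := A.mulVecLin.finrank_range_add_finrank_ker
    rw [← Matrix.rank, Module.finrank_fintype_fun_eq_card] at this
    omega
  refine (Submodule.eq_of_le_of_finrank_le ?_ ?_).symm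
  · exact (Submodule.span_singleton_le_iff_mem _ _).mpr hAf
  · rw [hker, finrank_span_singleton hf]

theorem sub_smul_mem_span_singleton_of_mulVec_eq_smul (A : Matrix m n K)
    (hA : A.rank + 1 = Fintype.card n) {f : n → K} (hf : f ≠ 0) (hAf : A *ᵥ f = 0)
    {X Y : n → K} {c : K} (h : A *ᵥ Y = c • A *ᵥ X) :
    Y - c • X ∈ K ∙ f := by
  rw [← A.ker_mulVecLin_eq_span_singleton hA hf hAf, LinearMap.mem_ker, mulVecLin_apply,
    mulVec_sub, mulVec_smul, h, sub_self]

end Matrix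

section Baseline

variable {K V : Type*} [Field K] [AddCommGroup V] [Module K V]

theorem eq_of_sub_smul_mem_span_singleton {f₁ f₂ X Y : V} {c₁ c₂ : K}
    (hX : X ∉ K ∙ f₁ ⊔ K ∙ f₂) (h₁ : Y - c₁ • X ∈ K ∙ f₁) (h₂ : Y - c₂ • X ∈ K ∙ f₂) :
    c₁ = c₂ := by
  by_contra hne
  have hmem : (c₂ - c₁) • X ∈ K ∙ f₁ ⊔ K ∙ f₂ := by
    have := Submodule.sub_mem _ (Submodule.mem_sup_left h₁) (Submodule.mem_sup_right h₂)
    rwa [sub_sub_sub_cancel_left, ← sub_smul] at this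
  exact hX ((Submodule.smul_mem_iff _ (sub_ne_zero.mpr (Ne.symm hne))).mp hmem)

theorem eq_smul_of_sub_smul_mem_span_singleton {f₁ f₂ X Y : V} {c₁ c₂ : K}
    (hf : ¬ ∃ c : K, f₂ = c • f₁) (hX : X ∉ K ∙ f₁ ⊔ K ∙ f₂)
    (h₁ : Y - c₁ • X ∈ K ∙ f₁) (h₂ : Y - c₂ • X ∈ K ∙ f₂) :
    Y = c₁ • X := by
  obtain rfl := eq_of_sub_smul_mem_span_singleton hX h₁ h₂
  have hdisj : Disjoint (K ∙ f₁) (K ∙ f₂) :=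
    Submodule.disjoint_span_singleton_of_notMem fun hmem ↦
      hf ((Submodule.mem_span_singleton.mp hmem).imp fun _ h ↦ h.symm)
  exact sub_eq_zero.mp (Submodule.disjoint_def.mp hdisj _ h₁ h₂)

end Baseline

theorem triangulation_unique_general (A₁ A₂ : Matrix (Fin 3) (Fin 4) ℝ)
    (h1 : A₁.rank = 3) (h2 : A₂.rank = 3)
    (f₁ f₂ : Fin 4 → ℝ) (hf₁ : f₁ ≠ 0) (hf₂ : f₂ ≠ 0)
    (hk₁ : A₁.mulVec f₁ = 0) (hk₂ : A₂.mulVec f₂ = 0)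
    (hdist : ¬ ∃ c : ℝ, f₂ = c • f₁)
    (X : Fin 4 → ℝ)
    (hXb : X ∉ Submodule.span ℝ ({f₁, f₂} : Set (Fin 4 → ℝ)))
    (X' : Fin 4 → ℝ)
    (e1 : ∃ c : ℝ, c ≠ 0 ∧ A₁.mulVec X' = c • A₁.mulVec X)
    (e2 : ∃ c : ℝ, c ≠ 0 ∧ A₂.mulVec X' = c • A₂.mulVec X) :
    ∃ c : ℝ, c ≠ 0 ∧ X' = c • X := by
  obtain ⟨c₁, hc₁, he₁⟩ := e1
  obtain ⟨c₂, -, he₂⟩ := e2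
  have hm₁ := A₁.sub_smul_mem_span_singleton_of_mulVec_eq_smul (by simp [h1]) hf₁ hk₁ he₁
  have hm₂ := A₂.sub_smul_mem_span_singleton_of_mulVec_eq_smul (by simp [h2]) hf₂ hk₂ he₂
  rw [Submodule.span_insert] at hXb
  exact ⟨c₁, hc₁, eq_smul_of_sub_smul_mem_span_singleton hdist hXb hm₁ hm₂⟩

/-- Triangulation from two views. If `A₁, A₂` are rank-3 cameras with
distinct focal points `f₁, f₂`, and `X` is a point of `P³` not on the baseline
(the span of `f₁` and `f₂`), then `X` is the unique point of `P³` mapping to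
`(A₁X, A₂X)` under both cameras. -/
theorem triangulation_unique (A₁ A₂ : Matrix (Fin 3) (Fin 4) ℝ)
    (h1 : A₁.rank = 3) (h2 : A₂.rank = 3)
    (f₁ f₂ : Fin 4 → ℝ) (hf₁ : f₁ ≠ 0) (hf₂ : f₂ ≠ 0)
    (hk₁ : A₁.mulVec f₁ = 0) (hk₂ : A₂.mulVec f₂ = 0)
    (hdist : ¬ ∃ c : ℝ, f₂ = c • f₁)
    (X : Fin 4 → ℝ) (hX : X ≠ 0)
    (hXb : X ∉ Submodule.span ℝ ({f₁, f₂} : Set (Fin 4 → ℝ)))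
    (X' : Fin 4 → ℝ) (hX' : X' ≠ 0)
    (e1 : ∃ c : ℝ, c ≠ 0 ∧ A₁.mulVec X' = c • A₁.mulVec X)
    (e2 : ∃ c : ℝ, c ≠ 0 ∧ A₂.mulVec X' = c • A₂.mulVec X) :
    ∃ c : ℝ, c ≠ 0 ∧ X' = c • X :=
  triangulation_unique_general A₁ A₂ h1 h2 f₁ f₂ hf₁ hf₂ hk₁ hk₂ hdist X hXb X' e1 e2
end

section
/- Let A₁, A₂ be rank-3 real 3×4 matrices with distinct focal points f₁ ≠ f₂. For points u₁, u₂ ∈ P^2 with u₁ ≠ e_{1←2} or u₂ ≠ e_{2←1} (where e_{i←j} = A_i f_j are the epipoles), the 6×6 matrix B = [[A₁,u₁,0],[A₂,0,u₂]] has rank at most 5 if and only if the back-projected lines of u₁ and u₂ intersect in P^3. -/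
/-!
Splitting `v ∈ ℝ⁶` as `(X, s, t)` with `X ∈ ℝ⁴`, the equation `B v = 0` says
`A₁ X = -s u₁` and `A₂ X = -t u₂`, i.e. `X` lies on both back-projected lines; as `u₁, u₂ ≠ 0`,
such a `v` is nonzero iff `X` is.
-/

def triMat (A₁ A₂ : Matrix (Fin 3) (Fin 4) ℝ) (u₁ u₂ : Fin 3 → ℝ) :
    Matrix (Fin 6) (Fin 6) ℝ :=
  Matrix.of fun i j =>
    if hi : (i : ℕ) < 3 then
      if hj : (j : ℕ) < 4 then A₁ ⟨i, hi⟩ ⟨j, hj⟩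
      else if (j : ℕ) = 4 then u₁ ⟨i, hi⟩ else 0
    else
      if hj : (j : ℕ) < 4 then A₂ ⟨(i : ℕ) - 3, by have := i.isLt; omega⟩ ⟨j, hj⟩
      else if (j : ℕ) = 4 then 0 else u₂ ⟨(i : ℕ) - 3, by have := i.isLt; omega⟩

open Matrix

theorem Matrix.rank_lt_card_iff_exists_mulVec_eq_zero {n K : Type*} [Fintype n] [Field K]
    (M : Matrix n n K) : M.rank < Fintype.card n ↔ ∃ v ≠ 0, M *ᵥ v = 0 := by
  have hsum := LinearMap.finrank_range_add_finrank_ker M.mulVecLin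
  rw [Module.finrank_fintype_fun_eq_card] at hsum
  have hker : (∃ v ≠ 0, M *ᵥ v = 0) ↔ LinearMap.ker M.mulVecLin ≠ ⊥ := by
    simp [Submodule.ne_bot_iff, and_comm]
  rw [hker, ne_eq, ← Submodule.finrank_eq_zero, Matrix.rank]
  omega

theorem Fin.append_eq_zero_iff {α : Type*} [Zero α] {m n : ℕ} {xs : Fin m → α} {ys : Fin n → α} :
    Fin.append xs ys = 0 ↔ xs = 0 ∧ ys = 0 := by
  refine ⟨fun h => ⟨funext fun i => ?_, funext fun i => ?_⟩, fun ⟨hx, hy⟩ => ?_⟩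
  · simpa using congrFun h (castAdd n i)
  · simpa using congrFun h (natAdd m i)
  · subst hx hy; ext i; refine Fin.addCases (fun i => ?_) (fun i => ?_) i <;> simp

lemma triMat_mulVec_append (A₁ A₂ : Matrix (Fin 3) (Fin 4) ℝ) (u₁ u₂ : Fin 3 → ℝ)
    (X : Fin 4 → ℝ) (st : Fin 2 → ℝ) :
    triMat A₁ A₂ u₁ u₂ *ᵥ Fin.append X st =
      Fin.append (A₁ *ᵥ X + st 0 • u₁) (A₂ *ᵥ X + st 1 • u₂) := by
  ext i
  fin_cases i <;>
    simp [triMat, mulVec, dotProduct, Fin.sum_univ_succ, Fin.append, Fin.addCases] <;> ring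

lemma triMat_mulVec_append_eq_zero_iff (A₁ A₂ : Matrix (Fin 3) (Fin 4) ℝ) (u₁ u₂ : Fin 3 → ℝ)
    (X : Fin 4 → ℝ) (st : Fin 2 → ℝ) :
    triMat A₁ A₂ u₁ u₂ *ᵥ Fin.append X st = 0 ↔
      A₁ *ᵥ X = -st 0 • u₁ ∧ A₂ *ᵥ X = -st 1 • u₂ := by
  rw [triMat_mulVec_append]
  exact Fin.append_eq_zero_iff.trans (by simp only [add_eq_zero_iff_eq_neg, neg_smul])

lemma exists_triMat_mulVec_eq_zero_iff {A₁ A₂ : Matrix (Fin 3) (Fin 4) ℝ} {u₁ u₂ : Fin 3 → ℝ}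
    (hu₁ : u₁ ≠ 0) (hu₂ : u₂ ≠ 0) :
    (∃ v ≠ 0, triMat A₁ A₂ u₁ u₂ *ᵥ v = 0) ↔
      ∃ X : Fin 4 → ℝ, X ≠ 0 ∧ (∃ c₁ : ℝ, A₁ *ᵥ X = c₁ • u₁) ∧ (∃ c₂ : ℝ, A₂ *ᵥ X = c₂ • u₂) := by
  constructor
  · rintro ⟨v, hv0, hv⟩
    obtain ⟨X, st, rfl⟩ : ∃ (X : Fin 4 → ℝ) (st : Fin 2 → ℝ), Fin.append X st = v :=
      ⟨_, _, Fin.append_castAdd_natAdd⟩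
    obtain ⟨h₁, h₂⟩ := (triMat_mulVec_append_eq_zero_iff A₁ A₂ u₁ u₂ X st).1 hv
    refine ⟨X, fun hX => hv0 ?_, ⟨_, h₁⟩, ⟨_, h₂⟩⟩
    subst hX
    have hs : st 0 = 0 := by simpa [hu₁] using h₁.symm
    have ht : st 1 = 0 := by simpa [hu₂] using h₂.symm
    exact Fin.append_eq_zero_iff.2 ⟨rfl, by ext i; fin_cases i <;> assumption⟩
  · rintro ⟨X, hX0, ⟨c₁, hc₁⟩, c₂, hc₂⟩
    refine ⟨Fin.append X ![-c₁, -c₂], fun h => hX0 (Fin.append_eq_zero_iff.1 h).1, ?_⟩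
    simpa [triMat_mulVec_append_eq_zero_iff] using ⟨hc₁, hc₂⟩

theorem rank_le_five_iff_backprojected_lines_meet_general
    (A₁ A₂ : Matrix (Fin 3) (Fin 4) ℝ)
    (u₁ u₂ : Fin 3 → ℝ) (hu₁ : u₁ ≠ 0) (hu₂ : u₂ ≠ 0) :
    (triMat A₁ A₂ u₁ u₂).rank ≤ 5 ↔
      ∃ X : Fin 4 → ℝ, X ≠ 0 ∧ (∃ c₁ : ℝ, A₁.mulVec X = c₁ • u₁) ∧
        (∃ c₂ : ℝ, A₂.mulVec X = c₂ • u₂) := by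
  rw [← Nat.lt_succ_iff, ← exists_triMat_mulVec_eq_zero_iff hu₁ hu₂,
    ← rank_lt_card_iff_exists_mulVec_eq_zero, Fintype.card_fin]

/-- For cameras `A₁, A₂` with distinct focal points, and image points
`u₁, u₂` not both equal to the respective epipoles `e₁←₂ = A₁f₂`, `e₂←₁ = A₂f₁`,
the matrix `B = [[A₁,u₁,0],[A₂,0,u₂]]` has rank at most 5 iff the back-projected
lines of `u₁` and `u₂` intersect in `P³`.  (The back-projected line of `uᵢ` is the
projective line `{X : AᵢX ∈ ℝ·uᵢ}`, which contains the focal point `fᵢ`.) -/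
theorem rank_le_five_iff_backprojected_lines_meet
    (A₁ A₂ : Matrix (Fin 3) (Fin 4) ℝ) (h1 : A₁.rank = 3) (h2 : A₂.rank = 3)
    (f₁ f₂ : Fin 4 → ℝ) (hf₁ : f₁ ≠ 0) (hf₂ : f₂ ≠ 0)
    (hk₁ : A₁.mulVec f₁ = 0) (hk₂ : A₂.mulVec f₂ = 0)
    (hdist : ¬ ∃ c : ℝ, f₂ = c • f₁)
    (u₁ u₂ : Fin 3 → ℝ) (hu₁ : u₁ ≠ 0) (hu₂ : u₂ ≠ 0)
    (hepi : (¬ ∃ c : ℝ, c ≠ 0 ∧ u₁ = c • A₁.mulVec f₂) ∨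
            (¬ ∃ c : ℝ, c ≠ 0 ∧ u₂ = c • A₂.mulVec f₁)) :
    (triMat A₁ A₂ u₁ u₂).rank ≤ 5 ↔
      ∃ X : Fin 4 → ℝ, X ≠ 0 ∧ (∃ c₁ : ℝ, A₁.mulVec X = c₁ • u₁) ∧
        (∃ c₂ : ℝ, A₂.mulVec X = c₂ • u₂) :=
  rank_le_five_iff_backprojected_lines_meet_general A₁ A₂ u₁ u₂ hu₁ hu₂
end

section
/- Let A₁, A₂ be rank-3 real 3×4 matrices with distinct focal points. The set of points (u₁,u₂) ∈ P^2 × P^2 at which the 6×6 matrix B = [[A₁,u₁,0],[A₂,0,u₂]] has rank at most 4 (i.e., all 5×5 minors vanish) consists of exactly one point, namely the pair of epipoles (e_{1←2}, e_{2←1}). -/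
open Module Submodule Matrix

section LinearAlgebra

variable {K V W : Type*} [Field K] [AddCommGroup V] [Module K V] [AddCommGroup W] [Module K W]

theorem Submodule.mem_span_singleton_iff_exists_ne_zero_smul {x y : V} (hx : x ≠ 0) :
    x ∈ K ∙ y ↔ ∃ c : K, c ≠ 0 ∧ y = c • x := by
  rw [mem_span_singleton]
  constructor
  · rintro ⟨a, rfl⟩
    have ha : a ≠ 0 := by rintro rfl; simp at hx
    exact ⟨a⁻¹, inv_ne_zero ha, (inv_smul_smul₀ ha y).symm⟩
  · rintro ⟨c, hc, rfl⟩
    exact ⟨c⁻¹, inv_smul_smul₀ hc x⟩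

variable [FiniteDimensional K V]

theorem LinearMap.finrank_comap_of_surjective [FiniteDimensional K W] {f : V →ₗ[K] W}
    (hf : Function.Surjective f) (p : Submodule K W) :
    finrank K (p.comap f) = finrank K p + finrank K (LinearMap.ker f) := by
  have hsurj : Function.Surjective (p.mkQ ∘ₗ f) := p.mkQ_surjective.comp hf
  have hcomp := LinearMap.finrank_range_add_finrank_ker (p.mkQ ∘ₗ f)
  have hf' := LinearMap.finrank_range_add_finrank_ker f
  rw [LinearMap.range_eq_top.2 hsurj, finrank_top, LinearMap.ker_comp, ker_mkQ] at hcomp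
  rw [LinearMap.range_eq_top.2 hf, finrank_top] at hf'
  have hq := p.finrank_quotient_add_finrank
  omega

theorem Submodule.two_le_finrank_of_linearIndependent {P : Submodule K V} {x y : V}
    (hx : x ∈ P) (hy : y ∈ P) (hxy : LinearIndependent K ![x, y]) : 2 ≤ finrank K P := by
  have hle : span K (Set.range ![x, y]) ≤ P := by
    rw [span_le, Set.range_subset_iff, Fin.forall_fin_two]
    exact ⟨hx, hy⟩
  simpa [finrank_span_eq_card hxy] using finrank_mono hle

theorem LinearMap.apply_ne_zero_of_linearIndependent {f : V →ₗ[K] W}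
    (hker : finrank K (LinearMap.ker f) ≤ 1) {x y : V} (hx : f x = 0)
    (hxy : LinearIndependent K ![x, y]) : f y ≠ 0 := fun hy ↦
  absurd (two_le_finrank_of_linearIndependent (P := LinearMap.ker f) hx hy hxy) (by omega)

theorem Submodule.two_le_finrank_inf_iff {P Q : Submodule K V} (hP : finrank K P = 2)
    (hQ : finrank K Q = 2) {x y : V} (hx : x ∈ P) (hy : y ∈ Q)
    (hxy : LinearIndependent K ![x, y]) :
    2 ≤ finrank K ↥(P ⊓ Q) ↔ y ∈ P ∧ x ∈ Q := by
  constructor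
  · intro h
    have hP' : P ⊓ Q = P := eq_of_le_of_finrank_le inf_le_left (hP ▸ h)
    have hQ' : P ⊓ Q = Q := eq_of_le_of_finrank_le inf_le_right (hQ ▸ h)
    have hPQ : P = Q := hP'.symm.trans hQ'
    exact ⟨hPQ ▸ hy, hPQ ▸ hx⟩
  · rintro ⟨hyP, hxQ⟩
    exact two_le_finrank_of_linearIndependent ⟨hx, hxQ⟩ ⟨hyP, hy⟩ hxy

end LinearAlgebra

namespace Matrix

variable {K : Type*} [Field K] {m n : Type*} [Fintype n]

theorem rank_add_finrank_ker_mulVecLin (A : Matrix m n K) :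
    A.rank + finrank K (LinearMap.ker A.mulVecLin) = Fintype.card n := by
  rw [rank, LinearMap.finrank_range_add_finrank_ker, finrank_fintype_fun_eq_card]

theorem finrank_ker_mulVecLin_of_rank_eq [Fintype m] {A : Matrix m n K}
    (hA : A.rank = Fintype.card m) :
    finrank K (LinearMap.ker A.mulVecLin) = Fintype.card n - Fintype.card m := by
  have := A.rank_add_finrank_ker_mulVecLin
  omega

theorem surjective_mulVecLin_of_rank_eq [Fintype m] (A : Matrix m n K)
    (hA : A.rank = Fintype.card m) : Function.Surjective A.mulVecLin := by
  rw [← LinearMap.range_eq_top]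
  exact eq_top_of_finrank_eq (hA.trans (finrank_fintype_fun_eq_card K).symm)

def backProjection (A : Matrix m n K) (u : m → K) : Submodule K (n → K) :=
  (K ∙ u).comap A.mulVecLin

theorem mem_backProjection {A : Matrix m n K} {u : m → K} {x : n → K} :
    x ∈ A.backProjection u ↔ A *ᵥ x ∈ K ∙ u :=
  Iff.rfl

theorem finrank_backProjection [Fintype m] {A : Matrix m n K}
    (hA : A.rank = Fintype.card m) {u : m → K} (hu : u ≠ 0) :
    finrank K (A.backProjection u) = finrank K (LinearMap.ker A.mulVecLin) + 1 := by
  rw [backProjection, LinearMap.finrank_comap_of_surjective (A.surjective_mulVecLin_of_rank_eq hA),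
    finrank_span_singleton hu, add_comm]

end Matrix

theorem triMat_mulVec_eq_zero_iff (A₁ A₂ : Matrix (Fin 3) (Fin 4) ℝ) (u₁ u₂ : Fin 3 → ℝ)
    (v : Fin 6 → ℝ) :
    triMat A₁ A₂ u₁ u₂ *ᵥ v = 0 ↔
      A₁ *ᵥ (v ∘ Fin.castAdd 2) + v 4 • u₁ = 0 ∧ A₂ *ᵥ (v ∘ Fin.castAdd 2) + v 5 • u₂ = 0 := by
  simp only [funext_iff, Fin.forall_fin_succ, IsEmpty.forall_iff]
  simp [triMat, mulVec, dotProduct, Fin.sum_univ_succ, and_assoc, add_assoc, mul_comm (v _)]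

theorem finrank_ker_triMat (A₁ A₂ : Matrix (Fin 3) (Fin 4) ℝ) {u₁ u₂ : Fin 3 → ℝ} (hu₁ : u₁ ≠ 0)
    (hu₂ : u₂ ≠ 0) :
    finrank ℝ (LinearMap.ker (triMat A₁ A₂ u₁ u₂).mulVecLin) =
      finrank ℝ ↥(A₁.backProjection u₁ ⊓ A₂.backProjection u₂) := by
  set π := (LinearMap.funLeft ℝ ℝ (Fin.castAdd 2 : Fin 4 → Fin 6)).domRestrict
    (LinearMap.ker (triMat A₁ A₂ u₁ u₂).mulVecLin)
  have hπ : Function.Injective π := by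
    rw [← LinearMap.ker_eq_bot, LinearMap.ker_eq_bot']
    rintro ⟨v, hv⟩ hπv
    replace hπv : v ∘ Fin.castAdd 2 = 0 := hπv
    rw [LinearMap.mem_ker, mulVecLin_apply, triMat_mulVec_eq_zero_iff, hπv] at hv
    simp only [mulVec_zero, zero_add, smul_eq_zero, hu₁, hu₂, or_false] at hv
    ext i
    fin_cases i
    exacts [congrFun hπv 0, congrFun hπv 1, congrFun hπv 2, congrFun hπv 3, hv.1, hv.2]
  have hrange : LinearMap.range π = A₁.backProjection u₁ ⊓ A₂.backProjection u₂ := by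
    ext x
    simp only [LinearMap.mem_range, mem_inf, mem_backProjection, mem_span_singleton]
    constructor
    · rintro ⟨⟨v, hv⟩, rfl⟩
      rw [LinearMap.mem_ker, mulVecLin_apply, triMat_mulVec_eq_zero_iff] at hv
      exact ⟨⟨-v 4, by rw [neg_smul]; exact neg_eq_of_add_eq_zero_left hv.1⟩,
        ⟨-v 5, by rw [neg_smul]; exact neg_eq_of_add_eq_zero_left hv.2⟩⟩
    · rintro ⟨⟨a, ha⟩, ⟨b, hb⟩⟩
      have hx : Fin.append x ![-a, -b] ∘ Fin.castAdd 2 = x := funext (Fin.append_left x _)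
      have h4 : Fin.append x ![-a, -b] 4 = -a := Fin.append_right x ![-a, -b] 0
      have h5 : Fin.append x ![-a, -b] 5 = -b := Fin.append_right x ![-a, -b] 1
      refine ⟨⟨Fin.append x ![-a, -b], ?_⟩, hx⟩
      rw [LinearMap.mem_ker, mulVecLin_apply, triMat_mulVec_eq_zero_iff, hx, h4, h5, ← ha, ← hb,
        neg_smul, neg_smul, add_neg_cancel, add_neg_cancel]
      exact ⟨rfl, rfl⟩
  rw [← hrange, LinearMap.finrank_range_of_inj hπ]

theorem rank_le_four_iff_epipoles_general
    (A₁ A₂ : Matrix (Fin 3) (Fin 4) ℝ) (h1 : A₁.rank = 3) (h2 : A₂.rank = 3)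
    (f₁ f₂ : Fin 4 → ℝ) (hf₁ : f₁ ≠ 0)
    (hk₁ : A₁.mulVec f₁ = 0) (hk₂ : A₂.mulVec f₂ = 0)
    (hdist : ¬ ∃ c : ℝ, f₂ = c • f₁)
    (u₁ u₂ : Fin 3 → ℝ) (hu₁ : u₁ ≠ 0) (hu₂ : u₂ ≠ 0) :
    (triMat A₁ A₂ u₁ u₂).rank ≤ 4 ↔
      ((∃ c : ℝ, c ≠ 0 ∧ u₁ = c • A₁.mulVec f₂) ∧
       (∃ c : ℝ, c ≠ 0 ∧ u₂ = c • A₂.mulVec f₁)) := by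
  have hf : LinearIndependent ℝ ![f₁, f₂] :=
    (LinearIndependent.pair_iff' hf₁).2 fun c hc ↦ hdist ⟨c, hc.symm⟩
  have hA₁ : A₁.rank = Fintype.card (Fin 3) := by rw [h1, Fintype.card_fin]
  have hA₂ : A₂.rank = Fintype.card (Fin 3) := by rw [h2, Fintype.card_fin]
  have hker₁ : finrank ℝ (LinearMap.ker A₁.mulVecLin) = 1 := by
    simp [finrank_ker_mulVecLin_of_rank_eq hA₁]
  have hker₂ : finrank ℝ (LinearMap.ker A₂.mulVecLin) = 1 := by
    simp [finrank_ker_mulVecLin_of_rank_eq hA₂]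
  have he₁ : A₁ *ᵥ f₂ ≠ 0 := LinearMap.apply_ne_zero_of_linearIndependent hker₁.le hk₁ hf
  have he₂ : A₂ *ᵥ f₁ ≠ 0 :=
    LinearMap.apply_ne_zero_of_linearIndependent hker₂.le hk₂ (.pair_symm_iff.1 hf)
  have hP₁ : finrank ℝ (A₁.backProjection u₁) = 2 := by
    rw [finrank_backProjection hA₁ hu₁, hker₁]
  have hP₂ : finrank ℝ (A₂.backProjection u₂) = 2 := by
    rw [finrank_backProjection hA₂ hu₂, hker₂]
  have hf₁P₁ : f₁ ∈ A₁.backProjection u₁ := by simp [mem_backProjection, hk₁]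
  have hf₂P₂ : f₂ ∈ A₂.backProjection u₂ := by simp [mem_backProjection, hk₂]
  have hB := (triMat A₁ A₂ u₁ u₂).rank_add_finrank_ker_mulVecLin
  rw [Fintype.card_fin, finrank_ker_triMat A₁ A₂ hu₁ hu₂] at hB
  rw [show (triMat A₁ A₂ u₁ u₂).rank ≤ 4 ↔
      2 ≤ finrank ℝ ↥(A₁.backProjection u₁ ⊓ A₂.backProjection u₂) by omega,
    two_le_finrank_inf_iff hP₁ hP₂ hf₁P₁ hf₂P₂ hf, mem_backProjection, mem_backProjection,
    mem_span_singleton_iff_exists_ne_zero_smul he₁, mem_span_singleton_iff_exists_ne_zero_smul he₂]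

/-- The locus of pairs `(u₁,u₂) ∈ P² × P²` where the 6×6 matrix
`B = [[A₁,u₁,0],[A₂,0,u₂]]` has rank at most 4 is exactly the single point given by
the pair of epipoles `(e₁←₂, e₂←₁) = (A₁f₂, A₂f₁)`. -/
theorem rank_le_four_iff_epipoles
    (A₁ A₂ : Matrix (Fin 3) (Fin 4) ℝ) (h1 : A₁.rank = 3) (h2 : A₂.rank = 3)
    (f₁ f₂ : Fin 4 → ℝ) (hf₁ : f₁ ≠ 0) (hf₂ : f₂ ≠ 0)
    (hk₁ : A₁.mulVec f₁ = 0) (hk₂ : A₂.mulVec f₂ = 0)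
    (hdist : ¬ ∃ c : ℝ, f₂ = c • f₁)
    (u₁ u₂ : Fin 3 → ℝ) (hu₁ : u₁ ≠ 0) (hu₂ : u₂ ≠ 0) :
    (triMat A₁ A₂ u₁ u₂).rank ≤ 4 ↔
      ((∃ c : ℝ, c ≠ 0 ∧ u₁ = c • A₁.mulVec f₂) ∧
       (∃ c : ℝ, c ≠ 0 ∧ u₂ = c • A₂.mulVec f₁)) :=
  rank_le_four_iff_epipoles_general A₁ A₂ h1 h2 f₁ f₂ hf₁ hk₁ hk₂ hdist u₁ u₂ hu₁ hu₂
end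

section
/- Let A₁, A₂ be rank-3 real 3×4 matrices with distinct focal points f₁ ≠ f₂. Then there exists a real 3×3 matrix F of rank 2 (the fundamental matrix) such that for all X ∈ P^3 avoiding both focal points, (A₁X)ᵀ F (A₂X) = 0; moreover F u₂ = 0 for u₂ = e_{2←1} and Fᵀ u₁ = 0 for u₁ = e_{1←2}. -/
/-!
Write `e = A₁ f₂` for the epipole in the first image. Every `u ∈ ℝ³` is `A₂ X` for some `X`,
unique up to adding multiples of `f₂`, which `A₁` sends to multiples of `e`; hence
`F (A₂ X) := e × A₁ X` is a well-defined linear map. The epipolar constraint is then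
`A₁ X ⬝ (e × A₁ X) = 0`, and `e ⬝ F u = 0` gives `Fᵀ e = 0`. If `F (A₂ X) = 0` then `A₁ X` is a
multiple of `e = A₁ f₂`, so `X ∈ span {f₁, f₂}` and `A₂ X` is a multiple of the epipole `A₂ f₁`;
as the focal points are distinct this epipole is nonzero, so `ker F` is a line and `F` has rank 2.
-/

open Matrix LinearMap Module

variable {K : Type*} [Field K]

theorem exists_smul_eq_of_cross_eq_zero {v w : Fin 3 → K} (hv : v ≠ 0) (h : v ⨯₃ w = 0) :
    ∃ a : K, a • v = w := by
  by_contra! hne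
  exact crossProduct_ne_zero_iff_linearIndependent.2 ((LinearIndependent.pair_iff' hv).2 hne) h

theorem LinearMap.apply_ne_zero_of_ker_eq_span {V W : Type*} [AddCommGroup V] [Module K V]
    [AddCommGroup W] [Module K W] {P : V →ₗ[K] W} {x y : V} (hP : ker P = K ∙ x)
    (hxy : LinearIndependent K ![x, y]) : P y ≠ 0 := by
  intro hy
  obtain ⟨a, rfl⟩ := Submodule.mem_span_singleton.1 (hP ▸ hy : y ∈ K ∙ x)
  exact (LinearIndependent.pair_iff' (hxy.ne_zero 0)).1 hxy a rfl

namespace Matrix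

variable {m n : Type*} [Fintype n]

theorem range_mulVecLin_eq_top_of_rank_eq [Fintype m] {A : Matrix m n K}
    (hA : A.rank = Fintype.card m) :
    range A.mulVecLin = ⊤ :=
  Submodule.eq_top_of_finrank_eq (by rwa [finrank_fintype_fun_eq_card])

theorem ker_mulVecLin_eq_span_of_rank_add_one {A : Matrix m n K}
    (hA : A.rank + 1 = Fintype.card n) {f : n → K} (hf : f ≠ 0) (hAf : A *ᵥ f = 0) :
    ker A.mulVecLin = K ∙ f := by
  refine (Submodule.eq_of_le_of_finrank_eq
    ((Submodule.span_singleton_le_iff_mem _ _).2 hAf) ?_).symm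
  have := A.mulVecLin.finrank_range_add_finrank_ker
  rw [finrank_fintype_fun_eq_card, ← hA] at this
  rw [finrank_span_singleton hf]
  exact (Nat.add_left_cancel this).symm

end Matrix

section FundamentalMap

variable {V : Type*} [AddCommGroup V] [Module K V] {P₁ P₂ : V →ₗ[K] Fin 3 → K}
  {g : (Fin 3 → K) →ₗ[K] V} {f₁ f₂ : V}

variable (P₁ g f₂) in
def fundamentalMap : (Fin 3 → K) →ₗ[K] Fin 3 → K :=
  crossProduct (P₁ f₂) ∘ₗ P₁ ∘ₗ g

theorem fundamentalMap_apply_of_comp_eq_id (hg : P₂ ∘ₗ g = LinearMap.id)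
    (hP₂ : ker P₂ = K ∙ f₂) (X : V) :
    fundamentalMap P₁ g f₂ (P₂ X) = P₁ f₂ ⨯₃ P₁ X := by
  obtain ⟨a, ha⟩ : ∃ a : K, a • f₂ = g (P₂ X) - X := by
    rw [← Submodule.mem_span_singleton, ← hP₂, mem_ker, map_sub, ← LinearMap.comp_apply, hg,
      id_apply, sub_self]
  rw [fundamentalMap, LinearMap.comp_apply, LinearMap.comp_apply, ← sub_add_cancel (g (P₂ X)) X,
    ← ha, map_add, map_smul, map_add, map_smul, cross_self, smul_zero, zero_add]

theorem ker_fundamentalMap (hg : P₂ ∘ₗ g = LinearMap.id) (hP₁ : ker P₁ = K ∙ f₁)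
    (hP₂ : ker P₂ = K ∙ f₂) (hf : LinearIndependent K ![f₁, f₂]) :
    ker (fundamentalMap P₁ g f₂) = K ∙ P₂ f₁ := by
  have hgu (u : Fin 3 → K) : P₂ (g u) = u := LinearMap.congr_fun hg u
  have hf₁ : P₁ f₁ = 0 := by rw [← mem_ker, hP₁]; exact Submodule.mem_span_singleton_self f₁
  have hf₂ : P₂ f₂ = 0 := by rw [← mem_ker, hP₂]; exact Submodule.mem_span_singleton_self f₂
  apply le_antisymm
  · intro u hu
    rw [mem_ker, ← hgu u, fundamentalMap_apply_of_comp_eq_id hg hP₂] at hu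
    obtain ⟨t, ht⟩ := exists_smul_eq_of_cross_eq_zero (apply_ne_zero_of_ker_eq_span hP₁ hf) hu
    obtain ⟨s, hs⟩ : ∃ s : K, s • f₁ = g u - t • f₂ := by
      rw [← Submodule.mem_span_singleton, ← hP₁, mem_ker, map_sub, map_smul, ht, sub_self]
    refine Submodule.mem_span_singleton.2 ⟨s, ?_⟩
    rw [← map_smul, hs, map_sub, hgu, map_smul, hf₂, smul_zero, sub_zero]
  · rw [Submodule.span_singleton_le_iff_mem, mem_ker, fundamentalMap_apply_of_comp_eq_id hg hP₂,
      hf₁, map_zero]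

theorem finrank_range_fundamentalMap (hg : P₂ ∘ₗ g = LinearMap.id) (hP₁ : ker P₁ = K ∙ f₁)
    (hP₂ : ker P₂ = K ∙ f₂) (hf : LinearIndependent K ![f₁, f₂]) :
    finrank K (range (fundamentalMap P₁ g f₂)) = 2 := by
  have := (fundamentalMap P₁ g f₂).finrank_range_add_finrank_ker
  have he : P₂ f₁ ≠ 0 := apply_ne_zero_of_ker_eq_span hP₂ (LinearIndependent.pair_symm_iff.1 hf)
  rw [ker_fundamentalMap hg hP₁ hP₂ hf, finrank_fin_fun, finrank_span_singleton he] at this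
  omega

end FundamentalMap

/-- Existence of the fundamental matrix.  For rank-3 cameras `A₁, A₂`
with distinct focal points `f₁ ≠ f₂`, there is a real 3×3 matrix `F` of rank 2 with
`(A₁X)ᵀ F (A₂X) = 0` for all `X ∈ P³` avoiding both focal points, and
`F e₂←₁ = 0`, `Fᵀ e₁←₂ = 0` for the epipoles `e₂←₁ = A₂f₁`, `e₁←₂ = A₁f₂`. -/
theorem exists_fundamental_matrix
    (A₁ A₂ : Matrix (Fin 3) (Fin 4) ℝ) (h1 : A₁.rank = 3) (h2 : A₂.rank = 3)
    (f₁ f₂ : Fin 4 → ℝ) (hf₁ : f₁ ≠ 0) (hf₂ : f₂ ≠ 0)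
    (hk₁ : A₁.mulVec f₁ = 0) (hk₂ : A₂.mulVec f₂ = 0)
    (hdist : ¬ ∃ c : ℝ, f₂ = c • f₁) :
    ∃ F : Matrix (Fin 3) (Fin 3) ℝ, F.rank = 2 ∧
      (∀ X : Fin 4 → ℝ, X ≠ 0 → (¬ ∃ c : ℝ, X = c • f₁) → (¬ ∃ c : ℝ, X = c • f₂) →
        dotProduct (A₁.mulVec X) (F.mulVec (A₂.mulVec X)) = 0) ∧
      F.mulVec (A₂.mulVec f₁) = 0 ∧
      F.transpose.mulVec (A₁.mulVec f₂) = 0 := by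
  have hP₁ := ker_mulVecLin_eq_span_of_rank_add_one (by rw [h1]; rfl) hf₁ hk₁
  have hP₂ := ker_mulVecLin_eq_span_of_rank_add_one (by rw [h2]; rfl) hf₂ hk₂
  have hf : LinearIndependent ℝ ![f₁, f₂] :=
    (LinearIndependent.pair_iff' hf₁).2 fun a h ↦ hdist ⟨a, h.symm⟩
  obtain ⟨g, hg⟩ := A₂.mulVecLin.exists_rightInverse_of_surjective
    (range_mulVecLin_eq_top_of_rank_eq h2)
  have hF (X : Fin 4 → ℝ) :
      fundamentalMap A₁.mulVecLin g f₂ (A₂ *ᵥ X) = (A₁ *ᵥ f₂) ⨯₃ (A₁ *ᵥ X) :=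
    fundamentalMap_apply_of_comp_eq_id hg hP₂ X
  refine ⟨toMatrix' (fundamentalMap A₁.mulVecLin g f₂), ?_, fun X _ _ _ ↦ ?_, ?_, ?_⟩
  · rw [Matrix.rank, ← Matrix.toLin'_apply', toLin'_toMatrix']
    exact finrank_range_fundamentalMap hg hP₁ hP₂ hf
  · rw [toMatrix'_mulVec, hF]
    exact dot_cross_self _ _
  · rw [toMatrix'_mulVec, hF, hk₁, map_zero]
  · rw [mulVec_transpose]
    refine dotProduct_eq_zero _ fun u ↦ ?_
    rw [← dotProduct_mulVec, toMatrix'_mulVec]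
    exact dot_self_cross _ _
end

section
/- Define the map σ : (ℝ³ \ {0}) × (ℝ³ \ {0}) → Sym₂(ℝ³) ≅ ℝ^6 by σ(u,v) = uvᵀ + vuᵀ, i.e., a₀₀ = 2u₀v₀, a₁₁ = 2u₁v₁, a₂₂ = 2u₂v₂, a₀₁ = u₁v₀ + u₀v₁, a₀₂ = u₂v₀ + u₀v₂, a₁₂ = u₂v₁ + u₁v₂. Then the symmetric 3×3 matrix (a_{ij}) has determinant zero, and σ(u,v) is proportional to σ(u',v') if and only if the unordered pair of projective points {[u],[v]} equals {[u'],[v']}. -/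
/-- The symmetric 3×3 matrix `uvᵀ + vuᵀ` representing the unordered pair `{[u],[v]}`
of points of `P²` in the Chow variety `Sym₂(P²) ⊂ P⁵`. -/
def symPair (u v : Fin 3 → ℝ) : Matrix (Fin 3) (Fin 3) ℝ :=
  Matrix.of fun i j => u i * v j + v i * u j

/-!
The quadratic form of `symPair u v` is `x ↦ 2 (u ⬝ᵥ x) (v ⬝ᵥ x)`, so proportional matrices give
proportional products of two linear forms, and the claim is unique factorization of such
products. If `f' g' = c f g` with `c ≠ 0`, then `ker f'` lies in `ker f ∪ ker g`, hence in one of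
them, say `ker f`; then `f` is a nonzero multiple of `f'`, and cancelling it, `g'` is a multiple
of `g` off the hyperplane `ker f`, hence everywhere.
-/

open Matrix
open LinearMap (ker mem_ker)

namespace Module.Dual

variable {K V : Type*} [Field K] [AddCommGroup V] [Module K V]

theorem exists_eq_smul_of_ker_le {f g : Module.Dual K V} (h : ker f ≤ ker g) :
    ∃ μ : K, g = μ • f := by
  have hg : g ∈ Submodule.span K (Set.range fun _ : Unit => f) :=
    mem_span_of_iInf_ker_le_ker (by simpa using h)
  obtain ⟨μ, hμ⟩ := Submodule.mem_span_singleton.mp (by simpa [Set.range_const] using hg)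
  exact ⟨μ, hμ.symm⟩

theorem eq_zero_of_apply_ne_zero_imp {f g : Module.Dual K V} (hf : f ≠ 0)
    (h : ∀ x, f x ≠ 0 → g x = 0) : g = 0 := by
  obtain ⟨y, hy⟩ : ∃ y, f y ≠ 0 := by simpa [LinearMap.ext_iff] using hf
  ext x
  by_cases hx : f x = 0
  · have hxy : f (x + y) ≠ 0 := by simpa [hx] using hy
    simpa [h y hy] using h (x + y) hxy
  · exact h x hx

variable {f g f' g' : Module.Dual K V} {c : K}

theorem ker_le_or_ker_le_of_mul_eq (hc : c ≠ 0) (h : ∀ x, f' x * g' x = c * (f x * g x)) :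
    ker f' ≤ ker f ∨ ker f' ≤ ker g := by
  refine AddSubgroupClass.subset_union.mp fun x hx => ?_
  have : c * (f x * g x) = 0 := by rw [← h x, mem_ker.mp hx, zero_mul]
  simpa [hc] using this

theorem eq_smul_and_eq_smul_of_mul_eq_of_ker_le (hc : c ≠ 0) (hf : f ≠ 0)
    (h : ∀ x, f' x * g' x = c * (f x * g x)) (hker : ker f' ≤ ker f) :
    (∃ a : K, a ≠ 0 ∧ f' = a • f) ∧ ∃ b : K, b ≠ 0 ∧ g' = b • g := by
  obtain ⟨μ, hμ⟩ := exists_eq_smul_of_ker_le hker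
  have hμ0 : μ ≠ 0 := by rintro rfl; exact hf (by simpa using hμ)
  have hf' : f' ≠ 0 := by rintro rfl; exact hf (by simpa using hμ)
  refine ⟨⟨μ⁻¹, inv_ne_zero hμ0, by rw [hμ, inv_smul_smul₀ hμ0]⟩,
    ⟨c * μ, mul_ne_zero hc hμ0, ?_⟩⟩
  rw [← sub_eq_zero]
  refine eq_zero_of_apply_ne_zero_imp hf' fun x hx => ?_
  have hx' : f' x * g' x = f' x * ((c * μ) * g x) := by
    rw [h x, hμ, LinearMap.smul_apply, smul_eq_mul]; ring
  simpa [sub_eq_zero] using mul_left_cancel₀ hx hx'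

theorem eq_smul_and_eq_smul_of_mul_eq (hc : c ≠ 0) (hf : f ≠ 0) (hg : g ≠ 0)
    (h : ∀ x, f' x * g' x = c * (f x * g x)) :
    ((∃ a : K, a ≠ 0 ∧ f' = a • f) ∧ ∃ b : K, b ≠ 0 ∧ g' = b • g) ∨
      ((∃ a : K, a ≠ 0 ∧ f' = a • g) ∧ ∃ b : K, b ≠ 0 ∧ g' = b • f) := by
  rcases ker_le_or_ker_le_of_mul_eq hc h with hker | hker
  · exact .inl (eq_smul_and_eq_smul_of_mul_eq_of_ker_le hc hf h hker)
  · refine .inr (eq_smul_and_eq_smul_of_mul_eq_of_ker_le hc hg (fun x => ?_) hker)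
    rw [h x, mul_comm (f x)]

end Module.Dual

theorem LinearEquiv.exists_ne_zero_eq_smul_iff {K M N : Type*} [Semiring K] [AddCommMonoid M]
    [AddCommMonoid N] [Module K M] [Module K N] (e : M ≃ₗ[K] N) {x y : M} :
    (∃ a : K, a ≠ 0 ∧ e x = a • e y) ↔ ∃ a : K, a ≠ 0 ∧ x = a • y := by
  simp only [← map_smul, e.injective.eq_iff]

theorem det_symPair (u v : Fin 3 → ℝ) : (symPair u v).det = 0 := by
  simp only [symPair, det_fin_three, of_apply]
  ring

theorem symPair_comm (u v : Fin 3 → ℝ) : symPair u v = symPair v u := by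
  ext i j
  simp only [symPair, of_apply]
  ring

theorem symPair_smul_smul (a b : ℝ) (u v : Fin 3 → ℝ) :
    symPair (a • u) (b • v) = (a * b) • symPair u v := by
  ext i j
  simp only [symPair, of_apply, Pi.smul_apply, Matrix.smul_apply, smul_eq_mul]
  ring

theorem dotProduct_symPair_mulVec (u v x : Fin 3 → ℝ) :
    x ⬝ᵥ (symPair u v *ᵥ x) = 2 * ((u ⬝ᵥ x) * (v ⬝ᵥ x)) := by
  simp only [symPair, dotProduct, mulVec, of_apply, Fin.sum_univ_three]
  ring

theorem dotProduct_mul_eq_of_symPair_eq_smul {u v u' v' : Fin 3 → ℝ} {c : ℝ}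
    (h : symPair u' v' = c • symPair u v) (x : Fin 3 → ℝ) :
    (u' ⬝ᵥ x) * (v' ⬝ᵥ x) = c * ((u ⬝ᵥ x) * (v ⬝ᵥ x)) := by
  have hx := congrArg (fun A => x ⬝ᵥ (A *ᵥ x)) h
  simp only [smul_mulVec, dotProduct_smul, dotProduct_symPair_mulVec, smul_eq_mul] at hx
  linarith

theorem symPair_det_zero_and_injective_general (u v u' v' : Fin 3 → ℝ)
    (hu : u ≠ 0) (hv : v ≠ 0) :
    (symPair u v).det = 0 ∧
    ((∃ c : ℝ, c ≠ 0 ∧ symPair u' v' = c • symPair u v) ↔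
      (((∃ a : ℝ, a ≠ 0 ∧ u' = a • u) ∧ (∃ b : ℝ, b ≠ 0 ∧ v' = b • v)) ∨
       ((∃ a : ℝ, a ≠ 0 ∧ u' = a • v) ∧ (∃ b : ℝ, b ≠ 0 ∧ v' = b • u)))) := by
  refine ⟨det_symPair u v, ⟨fun ⟨c, hc, h⟩ => ?_, ?_⟩⟩
  · let e := dotProductEquiv ℝ (Fin 3)
    simp only [← e.exists_ne_zero_eq_smul_iff]
    exact Module.Dual.eq_smul_and_eq_smul_of_mul_eq hc
      (e.map_ne_zero_iff.mpr hu) (e.map_ne_zero_iff.mpr hv)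
      (dotProduct_mul_eq_of_symPair_eq_smul h)
  · rintro (⟨⟨a, ha, rfl⟩, b, hb, rfl⟩ | ⟨⟨a, ha, rfl⟩, b, hb, rfl⟩)
    · exact ⟨a * b, mul_ne_zero ha hb, symPair_smul_smul a b u v⟩
    · exact ⟨a * b, mul_ne_zero ha hb, by rw [symPair_smul_smul, symPair_comm]⟩

/-- The symmetric matrix `σ(u,v) = uvᵀ + vuᵀ` has determinant zero, and
`σ(u,v)` is proportional to `σ(u',v')` iff the unordered pairs of projective points
`{[u],[v]}` and `{[u'],[v']}` coincide. -/
theorem symPair_det_zero_and_injective (u v u' v' : Fin 3 → ℝ)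
    (hu : u ≠ 0) (hv : v ≠ 0) (hu' : u' ≠ 0) (hv' : v' ≠ 0) :
    (symPair u v).det = 0 ∧
    ((∃ c : ℝ, c ≠ 0 ∧ symPair u' v' = c • symPair u v) ↔
      (((∃ a : ℝ, a ≠ 0 ∧ u' = a • u) ∧ (∃ b : ℝ, b ≠ 0 ∧ v' = b • v)) ∨
       ((∃ a : ℝ, a ≠ 0 ∧ u' = a • v) ∧ (∃ b : ℝ, b ≠ 0 ∧ v' = b • u)))) :=
  symPair_det_zero_and_injective_general u v u' v' hu hv
end

section
/- Let A₁, A₂ be rank-3 real 3×4 matrices such that the 4×4 matrix formed by stacking the last row of A₁ on top of A₂ (equivalently, suitable genericity) makes the first four columns of the bottom 4×6 submatrix of B = [[A₁,u₁,0],[A₂,0,u₂]] linearly independent. If B has rank 5, then at least one of the two 5×6 submatrices B₁, B₂ obtained by deleting the first or second row of B has rank 5. -/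
/-- The 4×4 matrix obtained by stacking the last row of `A₁` on top of `A₂`:
the first four columns of the bottom 4×6 submatrix of `triMat A₁ A₂ u₁ u₂`. -/
def stackMat (A₁ A₂ : Matrix (Fin 3) (Fin 4) ℝ) : Matrix (Fin 4) (Fin 4) ℝ :=
  Matrix.of fun i j =>
    if h : (i : ℕ) = 0 then A₁ 2 j
    else A₂ ⟨(i : ℕ) - 1, by have := i.isLt; omega⟩ j

open Module Submodule

theorem Set.insert_compl_pair {α : Type*} {a b : α} (h : a ≠ b) :
    insert b ({a, b}ᶜ : Set α) = {a}ᶜ := by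
  ext k
  by_cases hk : k = b <;> simp [hk, h.symm]

theorem Submodule.mem_span_of_finrank_span_insert_le {K V : Type*} [DivisionRing K]
    [AddCommGroup V] [Module K V] [FiniteDimensional K V] {s : Set V} {x : V}
    (h : finrank K (span K (insert x s)) ≤ finrank K (span K s)) : x ∈ span K s := by
  rw [eq_of_le_of_finrank_le (span_mono (Set.subset_insert x s)) h]
  exact subset_span (Set.mem_insert x s)

namespace Matrix

variable {K m : Type*} [Field K] [Fintype m]

theorem rank_submatrix_eq_finrank_span_image {m₀ n : Type*} [Finite m₀] (B : Matrix n m K)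
    (r : m₀ → n) : (B.submatrix r id).rank = finrank K (span K (B.row '' Set.range r)) := by
  rw [rank_eq_finrank_span_row, ← Set.range_comp]
  rfl

theorem rank_le_of_rank_submatrix_succAbove_le {n r : ℕ} (B : Matrix (Fin (n + 1)) m K)
    {i j : Fin (n + 1)} (hij : i ≠ j)
    (hi : (B.submatrix i.succAbove id).rank ≤ r) (hj : (B.submatrix j.succAbove id).rank ≤ r)
    (hr : r ≤ finrank K (span K (B.row '' {i, j}ᶜ))) :
    B.rank ≤ r := by
  set S := B.row '' {i, j}ᶜ
  rw [rank_submatrix_eq_finrank_span_image, Fin.range_succAbove, ← Set.insert_compl_pair hij,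
    Set.image_insert_eq] at hi
  rw [rank_submatrix_eq_finrank_span_image, Fin.range_succAbove,
    ← Set.insert_compl_pair hij.symm, Set.pair_comm, Set.image_insert_eq] at hj
  have hrows : Set.range B.row = insert (B.row i) (insert (B.row j) S) := by
    rw [← Set.image_insert_eq, ← Set.image_insert_eq, Set.insert_compl_pair hij, ← Set.image_univ]
    congr 1
    ext k
    by_cases hk : k = i <;> simp [hk]
  have hjS : B.row j ∈ span K S := mem_span_of_finrank_span_insert_le (hi.trans hr)
  have hiS : B.row i ∈ span K S := mem_span_of_finrank_span_insert_le (hj.trans hr)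
  calc B.rank = finrank K (span K (Set.range B.row)) := rank_eq_finrank_span_row B
    _ ≤ finrank K (span K S) := by
        refine finrank_mono (span_le.2 ?_)
        rw [hrows]
        rintro z (rfl | rfl | hz)
        exacts [hiS, hjS, subset_span hz]
    _ ≤ finrank K (span K (insert (B.row j) S)) := finrank_mono (span_mono (Set.subset_insert _ _))
    _ ≤ r := hi

end Matrix

theorem stackMat_eq_submatrix_triMat (A₁ A₂ : Matrix (Fin 3) (Fin 4) ℝ) (u₁ u₂ : Fin 3 → ℝ) :
    stackMat A₁ A₂ = (triMat A₁ A₂ u₁ u₂).submatrix (Fin.natAdd 2) (Fin.castLE (by norm_num)) := by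
  ext i j
  fin_cases i <;> simp [stackMat, triMat]

theorem four_le_finrank_span_triMat_row_image_compl (A₁ A₂ : Matrix (Fin 3) (Fin 4) ℝ)
    (u₁ u₂ : Fin 3 → ℝ) (hgen : (stackMat A₁ A₂).det ≠ 0) :
    4 ≤ finrank ℝ (span ℝ ((triMat A₁ A₂ u₁ u₂).row '' {0, 1}ᶜ)) := by
  have hrange : Set.range (Fin.natAdd 2 : Fin 4 → Fin 6) = {0, 1}ᶜ := by
    rw [Fin.range_natAdd]
    ext k
    fin_cases k <;> simp
  have hstack : (stackMat A₁ A₂).rank = 4 := by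
    rw [(stackMat A₁ A₂).rank_of_isUnit ((Matrix.isUnit_iff_isUnit_det _).2 hgen.isUnit),
      Fintype.card_fin]
  have hcols := ((triMat A₁ A₂ u₁ u₂).submatrix (Fin.natAdd 2 : Fin 4 → Fin 6) id).rank_submatrix_le
    id (Fin.castLE (by norm_num : 4 ≤ 6))
  rwa [Matrix.submatrix_submatrix, Function.comp_id, Function.id_comp,
    ← stackMat_eq_submatrix_triMat A₁ A₂ u₁ u₂, hstack,
    Matrix.rank_submatrix_eq_finrank_span_image, hrange] at hcols

theorem rank_five_deleted_row_general (A₁ A₂ : Matrix (Fin 3) (Fin 4) ℝ)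
    (u₁ u₂ : Fin 3 → ℝ)
    (hgen : (stackMat A₁ A₂).det ≠ 0)
    (hB : (triMat A₁ A₂ u₁ u₂).rank = 5) :
    ((triMat A₁ A₂ u₁ u₂).submatrix (Fin.succAbove 0) id).rank = 5 ∨
    ((triMat A₁ A₂ u₁ u₂).submatrix (Fin.succAbove 1) id).rank = 5 := by
  set B := triMat A₁ A₂ u₁ u₂
  have hdel_le (i : Fin 6) (h : (B.submatrix i.succAbove id).rank ≠ 5) :
      (B.submatrix i.succAbove id).rank ≤ 4 := by
    have := (B.submatrix i.succAbove id).rank_le_card_height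
    rw [Fintype.card_fin] at this
    omega
  by_contra! h
  have := B.rank_le_of_rank_submatrix_succAbove_le (by decide : (0 : Fin 6) ≠ 1)
    (hdel_le 0 h.1) (hdel_le 1 h.2) (four_le_finrank_span_triMat_row_image_compl A₁ A₂ u₁ u₂ hgen)
  omega

/-- If the 4×4 matrix formed by the last row of `A₁` stacked on `A₂` is
invertible (genericity) and `B = [[A₁,u₁,0],[A₂,0,u₂]]` has rank 5, then at least one
of the 5×6 submatrices `B₁, B₂` obtained by deleting the first or second row of `B`
has rank 5. -/
theorem rank_five_deleted_row (A₁ A₂ : Matrix (Fin 3) (Fin 4) ℝ)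
    (h1 : A₁.rank = 3) (h2 : A₂.rank = 3)
    (u₁ u₂ : Fin 3 → ℝ)
    (hgen : (stackMat A₁ A₂).det ≠ 0)
    (hB : (triMat A₁ A₂ u₁ u₂).rank = 5) :
    ((triMat A₁ A₂ u₁ u₂).submatrix (Fin.succAbove 0) id).rank = 5 ∨
    ((triMat A₁ A₂ u₁ u₂).submatrix (Fin.succAbove 1) id).rank = 5 :=
  rank_five_deleted_row_general A₁ A₂ u₁ u₂ hgen hB
end

section
/- Let A₁, A₂ be rank-3 real 3×4 matrices with distinct focal points, and suppose X, Y ∈ P³ both avoid the baseline. Let B and C be the corresponding 6×6 triangulation matrices built from u = (A₁X, A₂X) and v = (A₁Y, A₂Y), with 5×6 submatrices B_i, C_k of rank 5. Then for any indices i, k the world points satisfy X = [∧̃₅B_i] and Y = [∧̃₅C_k] in P³, and hence Q(∧̃₅B_i, ∧̃₅C_k) = 0 if and only if Q(X,Y) = 0, where Q is the bihomogeneous unit-distance polynomial. -/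
def rigidQ (X Y : Fin 4 → ℝ) : ℝ :=
  (X 0 * Y 3 - Y 0 * X 3) ^ 2 + (X 1 * Y 3 - Y 1 * X 3) ^ 2 +
    (X 2 * Y 3 - Y 2 * X 3) ^ 2 - X 3 ^ 2 * Y 3 ^ 2

/-- The vector of signed maximal minors of a 5×6 matrix. -/
def signedMinors (M : Matrix (Fin 5) (Fin 6) ℝ) : Fin 6 → ℝ :=
  fun j => (-1 : ℝ) ^ (j : ℕ) * (M.submatrix id j.succAbove).det

/-- The first four coordinates `∧̃₅M ∈ ℝ⁴` of the signed maximal minor vector. -/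
def tildeMinors (M : Matrix (Fin 5) (Fin 6) ℝ) : Fin 4 → ℝ :=
  fun j => signedMinors M ⟨(j : ℕ), by have := j.isLt; omega⟩

/-!
Laplace expansion along an added first row gives `det (y; B) = y ⬝ᵥ m(B)` for the vector `m(B)`
of signed maximal minors of an `n × (n+1)` matrix `B`. Taking `y` a row of `B` shows
`B m(B) = 0`; taking `y` off the row space shows `m(B) ≠ 0` when `B` has rank `n`. Hence `m(B)`
spans the one-dimensional kernel of `B` (Cramer's rule). The lifted point `(X, -1, -1)` is killed
by the triangulation matrix built from `A₁X, A₂X`, hence by each of its rank-5 row deletions, so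
`∧̃₅B_i` is a nonzero multiple of `X`; and `Q` is bihomogeneous, so its vanishing is unchanged.
-/

namespace Matrix

section CommRing

variable {R : Type*} [CommRing R] {n : ℕ}

def signedMaxMinors (B : Matrix (Fin n) (Fin (n + 1)) R) : Fin (n + 1) → R :=
  fun j => (-1) ^ (j : ℕ) * (B.submatrix id j.succAbove).det

theorem det_of_cons_eq_dotProduct_signedMaxMinors (y : Fin (n + 1) → R)
    (B : Matrix (Fin n) (Fin (n + 1)) R) :
    (of (Fin.cons y B : Fin (n + 1) → Fin (n + 1) → R)).det = y ⬝ᵥ signedMaxMinors B := by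
  rw [det_succ_row_zero, dotProduct]
  refine Finset.sum_congr rfl fun j _ => ?_
  rw [show (of (Fin.cons y B)).submatrix Fin.succ j.succAbove = B.submatrix id j.succAbove
    from rfl]
  change (-1) ^ (j : ℕ) * y j * _ = y j * ((-1) ^ (j : ℕ) * _)
  ring

theorem mulVec_signedMaxMinors (B : Matrix (Fin n) (Fin (n + 1)) R) :
    B *ᵥ signedMaxMinors B = 0 := by
  funext r
  rw [mulVec, ← det_of_cons_eq_dotProduct_signedMaxMinors]
  exact det_zero_of_row_eq (Fin.succ_ne_zero r).symm rfl

end CommRing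

section Field

variable {K : Type*} [Field K] {n : ℕ}

theorem signedMaxMinors_ne_zero {B : Matrix (Fin n) (Fin (n + 1)) K} (hB : B.rank = n) :
    signedMaxMinors B ≠ 0 := by
  have hrows : LinearIndependent K B.row := by
    rw [linearIndependent_iff_card_eq_finrank_span, Fintype.card_fin, Set.finrank,
      ← rank_eq_finrank_span_row, hB]
  obtain ⟨y, -, hy⟩ : ∃ y ∈ (⊤ : Submodule K (Fin (n + 1) → K)),
      y ∉ Submodule.span K (Set.range B.row) := by
    refine SetLike.exists_of_lt (lt_top_iff_ne_top.2 fun htop => ?_)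
    have := congrArg (fun s : Submodule K (Fin (n + 1) → K) => Module.finrank K s) htop
    rw [← rank_eq_finrank_span_row, hB, finrank_top, Module.finrank_fin_fun] at this
    omega
  have hdet : (of (Fin.cons y B : Fin (n + 1) → Fin (n + 1) → K)).det ≠ 0 := by
    rw [← isUnit_iff_ne_zero, ← isUnit_iff_isUnit_det, ← linearIndependent_rows_iff_isUnit]
    exact linearIndependent_finCons.2 ⟨hrows, hy⟩
  intro h
  rw [det_of_cons_eq_dotProduct_signedMaxMinors, h, dotProduct_zero] at hdet
  exact hdet rfl

theorem exists_signedMaxMinors_eq_smul {B : Matrix (Fin n) (Fin (n + 1)) K} (hB : B.rank = n)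
    {w : Fin (n + 1) → K} (hw₀ : w ≠ 0) (hw : B *ᵥ w = 0) :
    ∃ c : K, c ≠ 0 ∧ signedMaxMinors B = c • w := by
  have hker : Module.finrank K (LinearMap.ker B.mulVecLin) = 1 := by
    have := LinearMap.finrank_range_add_finrank_ker B.mulVecLin
    rw [← rank, hB, Module.finrank_fin_fun] at this
    omega
  obtain ⟨c, hc⟩ := (finrank_eq_one_iff_of_nonzero' (⟨w, hw⟩ : LinearMap.ker B.mulVecLin)
    fun h => hw₀ (congrArg Subtype.val h)).1 hker
      ⟨signedMaxMinors B, mulVec_signedMaxMinors B⟩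
  refine ⟨c, ?_, (congrArg Subtype.val hc).symm⟩
  rintro rfl
  exact signedMaxMinors_ne_zero hB (by simpa using (congrArg Subtype.val hc).symm)

end Field

end Matrix

theorem signedMinors_eq_signedMaxMinors (M : Matrix (Fin 5) (Fin 6) ℝ) :
    signedMinors M = Matrix.signedMaxMinors M :=
  rfl

def liftedPoint (X : Fin 4 → ℝ) : Fin 6 → ℝ := ![X 0, X 1, X 2, X 3, -1, -1]

theorem triMat_mulVec_liftedPoint (A₁ A₂ : Matrix (Fin 3) (Fin 4) ℝ) (X : Fin 4 → ℝ) :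
    (triMat A₁ A₂ (A₁.mulVec X) (A₂.mulVec X)).mulVec (liftedPoint X) = 0 := by
  funext r
  fin_cases r <;>
    simp [triMat, liftedPoint, Matrix.mulVec, dotProduct, Fin.sum_univ_succ] <;>
    ring

theorem tildeMinors_eq_smul_of_signedMaxMinors_eq_smul {M : Matrix (Fin 5) (Fin 6) ℝ}
    {X : Fin 4 → ℝ} {c : ℝ} (h : Matrix.signedMaxMinors M = c • liftedPoint X) :
    tildeMinors M = c • X := by
  funext j
  simp only [tildeMinors, signedMinors_eq_signedMaxMinors, h]
  fin_cases j <;> rfl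

theorem exists_tildeMinors_triMat_eq_smul (A₁ A₂ : Matrix (Fin 3) (Fin 4) ℝ)
    (X : Fin 4 → ℝ) (i : Fin 6)
    (h : ((triMat A₁ A₂ (A₁.mulVec X) (A₂.mulVec X)).submatrix i.succAbove id).rank = 5) :
    ∃ c : ℝ, c ≠ 0 ∧
      tildeMinors ((triMat A₁ A₂ (A₁.mulVec X) (A₂.mulVec X)).submatrix i.succAbove id)
        = c • X := by
  have hker : ((triMat A₁ A₂ (A₁.mulVec X) (A₂.mulVec X)).submatrix i.succAbove id).mulVec
      (liftedPoint X) = 0 := by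
    funext r
    exact congrFun (triMat_mulVec_liftedPoint A₁ A₂ X) (i.succAbove r)
  obtain ⟨c, hc, hcX⟩ := Matrix.exists_signedMaxMinors_eq_smul h
    (fun h0 => by simpa [liftedPoint] using congrFun h0 4) hker
  exact ⟨c, hc, tildeMinors_eq_smul_of_signedMaxMinors_eq_smul hcX⟩

theorem rigidQ_smul_smul (c d : ℝ) (X Y : Fin 4 → ℝ) :
    rigidQ (c • X) (d • Y) = c ^ 2 * d ^ 2 * rigidQ X Y := by
  simp only [rigidQ, Pi.smul_apply, smul_eq_mul]
  ring

theorem cramer_recovers_world_points_general (A₁ A₂ : Matrix (Fin 3) (Fin 4) ℝ)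
    (X Y : Fin 4 → ℝ)
    (i k : Fin 6)
    (hBi : ((triMat A₁ A₂ (A₁.mulVec X) (A₂.mulVec X)).submatrix i.succAbove id).rank = 5)
    (hCk : ((triMat A₁ A₂ (A₁.mulVec Y) (A₂.mulVec Y)).submatrix k.succAbove id).rank = 5) :
    (∃ c : ℝ, c ≠ 0 ∧
      tildeMinors ((triMat A₁ A₂ (A₁.mulVec X) (A₂.mulVec X)).submatrix i.succAbove id)
        = c • X) ∧
    (∃ d : ℝ, d ≠ 0 ∧
      tildeMinors ((triMat A₁ A₂ (A₁.mulVec Y) (A₂.mulVec Y)).submatrix k.succAbove id)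
        = d • Y) ∧
    (rigidQ
        (tildeMinors ((triMat A₁ A₂ (A₁.mulVec X) (A₂.mulVec X)).submatrix i.succAbove id))
        (tildeMinors ((triMat A₁ A₂ (A₁.mulVec Y) (A₂.mulVec Y)).submatrix k.succAbove id))
        = 0
      ↔ rigidQ X Y = 0) := by
  obtain ⟨c, hc, hcX⟩ := exists_tildeMinors_triMat_eq_smul A₁ A₂ X i hBi
  obtain ⟨d, hd, hdY⟩ := exists_tildeMinors_triMat_eq_smul A₁ A₂ Y k hCk
  refine ⟨⟨c, hc, hcX⟩, ⟨d, hd, hdY⟩, ?_⟩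
  rw [hcX, hdY, rigidQ_smul_smul]
  simp [hc, hd]

/-- With `B, C` the triangulation matrices of the image tuples of two
world points `X, Y` off the baseline, and `B_i, C_k` deleted-row submatrices of rank 5,
Cramer's rule recovers `X = [∧̃₅B_i]`, `Y = [∧̃₅C_k]` in `P³`, and hence
`Q(∧̃₅B_i, ∧̃₅C_k) = 0 ↔ Q(X,Y) = 0`. -/
theorem cramer_recovers_world_points (A₁ A₂ : Matrix (Fin 3) (Fin 4) ℝ)
    (h1 : A₁.rank = 3) (h2 : A₂.rank = 3)
    (f₁ f₂ : Fin 4 → ℝ) (hf₁ : f₁ ≠ 0) (hf₂ : f₂ ≠ 0)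
    (hk₁ : A₁.mulVec f₁ = 0) (hk₂ : A₂.mulVec f₂ = 0)
    (hdist : ¬ ∃ c : ℝ, f₂ = c • f₁)
    (X Y : Fin 4 → ℝ) (hX : X ≠ 0) (hY : Y ≠ 0)
    (hXb : X ∉ Submodule.span ℝ ({f₁, f₂} : Set (Fin 4 → ℝ)))
    (hYb : Y ∉ Submodule.span ℝ ({f₁, f₂} : Set (Fin 4 → ℝ)))
    (i k : Fin 6)
    (hBi : ((triMat A₁ A₂ (A₁.mulVec X) (A₂.mulVec X)).submatrix i.succAbove id).rank = 5)
    (hCk : ((triMat A₁ A₂ (A₁.mulVec Y) (A₂.mulVec Y)).submatrix k.succAbove id).rank = 5) :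
    (∃ c : ℝ, c ≠ 0 ∧
      tildeMinors ((triMat A₁ A₂ (A₁.mulVec X) (A₂.mulVec X)).submatrix i.succAbove id)
        = c • X) ∧
    (∃ d : ℝ, d ≠ 0 ∧
      tildeMinors ((triMat A₁ A₂ (A₁.mulVec Y) (A₂.mulVec Y)).submatrix k.succAbove id)
        = d • Y) ∧
    (rigidQ
        (tildeMinors ((triMat A₁ A₂ (A₁.mulVec X) (A₂.mulVec X)).submatrix i.succAbove id))
        (tildeMinors ((triMat A₁ A₂ (A₁.mulVec Y) (A₂.mulVec Y)).submatrix k.succAbove id))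
        = 0
      ↔ rigidQ X Y = 0) :=
  cramer_recovers_world_points_general A₁ A₂ X Y i k hBi hCk
end
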